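/- arXiv:1111.0096 — 3 statements merged into one kernel-verified Lean document; each statement's English description precedes it below -/
import Mathlib

section
/- Let f and f_j (j ∈ ℕ) be complex-valued functions in L¹(ℝ; dλ), and suppose there exists M > 0 such that ‖f_j‖_{L¹(ℝ;dλ)} ≤ M for all j ∈ ℕ. If for every polynomial P(X,Y) in two variables with complex coefficients one has lim_{j→∞} ∫_ℝ f_j(λ) P((λ+i)⁻¹, (λ−i)⁻¹) dλ = ∫_ℝ f(λ) P((λ+i)⁻¹, (λ−i)⁻¹) dλ, then for every continuous function g : ℝ → ℂ vanishing at infinity, lim_{j→∞} ∫_ℝ f_j(λ) g(λ) dλ = ∫_ℝ f(λ) g(λ) dλ. -/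
/-!
On the one-point compactification of `ℝ`, the function `(λ + i)⁻¹` (extended by `0` at `∞`)
separates points and its conjugate is `(λ - i)⁻¹`, so by Stone–Weierstrass the polynomials in
these two functions are uniformly dense in `C(ℝ ∪ {∞}, ℂ)`, which contains every `g` vanishing at
infinity. The functionals `φ ↦ ∫ fⱼ φ` are all `M`-Lipschitz for the sup norm, hence
equicontinuous, so the set of `φ` on which they converge to `∫ f φ` is closed; it contains the
dense set of polynomials by hypothesis, hence everything.
-/

open MeasureTheory Filter Complex Topology

section IntegralPairing

variable {α K 𝕜 : Type*} [MeasurableSpace α] [TopologicalSpace α] [OpensMeasurableSpace α]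
  [TopologicalSpace K] [CompactSpace K] [RCLike 𝕜] {μ : Measure α} {h : α → 𝕜}

lemma integrable_mul_comp_continuousMap (hh : Integrable h μ) (e : C(α, K)) (φ : C(K, 𝕜)) :
    Integrable (fun a => h a * φ (e a)) μ :=
  hh.mul_bdd (φ.comp e).continuous.aestronglyMeasurable
    (.of_forall fun a => φ.norm_coe_le_norm (e a))

lemma lipschitzWith_integral_mul_comp_continuousMap (hh : Integrable h μ) {M : ℝ}
    (hM : ∫ a, ‖h a‖ ∂μ ≤ M) (e : C(α, K)) :
    LipschitzWith M.toNNReal (fun φ : C(K, 𝕜) => ∫ a, h a * φ (e a) ∂μ) := by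
  refine LipschitzWith.of_dist_le_mul fun φ ψ => ?_
  rw [dist_eq_norm, ← integral_sub (integrable_mul_comp_continuousMap hh e φ)
    (integrable_mul_comp_continuousMap hh e ψ)]
  calc ‖∫ a, h a * φ (e a) - h a * ψ (e a) ∂μ‖
      ≤ ∫ a, ‖h a‖ * dist φ ψ ∂μ := by
        refine norm_integral_le_of_norm_le (hh.norm.mul_const _) (.of_forall fun a => ?_)
        rw [← mul_sub, norm_mul, ← dist_eq_norm]
        gcongr
        exact φ.dist_apply_le_dist (e a)
    _ = (∫ a, ‖h a‖ ∂μ) * dist φ ψ := integral_mul_const _ _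
    _ ≤ M.toNNReal * dist φ ψ := by
        gcongr
        exact hM.trans (Real.le_coe_toNNReal M)

end IntegralPairing

lemma StarAlgebra.adjoin_singleton_toSubalgebra_eq_range_aeval {R A : Type*} [CommSemiring R]
    [StarRing R] [CommSemiring A] [Algebra R A] [StarRing A] [StarModule R A] (a : A) :
    (StarAlgebra.adjoin R {a}).toSubalgebra = (MvPolynomial.aeval ![a, star a]).range := by
  rw [StarAlgebra.adjoin_toSubalgebra, ← Algebra.adjoin_range_eq_range_aeval,
    Matrix.range_cons_cons_empty, Set.star_singleton, Set.singleton_union]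

lemma ofReal_add_I_ne_zero (l : ℝ) : (l : ℂ) + I ≠ 0 := by
  simp [Complex.ext_iff]

lemma tendsto_inv_ofReal_add_I_cocompact :
    Tendsto (fun l : ℝ => ((l : ℂ) + I)⁻¹) (cocompact ℝ) (𝓝 0) := by
  rw [← Metric.cobounded_eq_cocompact]
  exact tendsto_inv₀_cobounded.comp <|
    (tendsto_add_const_cobounded I).comp isometry_ofReal.antilipschitz.tendsto_cobounded

noncomputable def invAddI : C(OnePoint ℝ, ℂ) :=
  OnePoint.continuousMapMk
    ⟨_, (continuous_ofReal.add continuous_const).inv₀ ofReal_add_I_ne_zero⟩ 0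
    (by rw [coclosedCompact_eq_cocompact]; exact tendsto_inv_ofReal_add_I_cocompact)

lemma invAddI_coe (l : ℝ) : invAddI l = ((l : ℂ) + I)⁻¹ := rfl

lemma star_invAddI_coe (l : ℝ) : (star invAddI) l = ((l : ℂ) - I)⁻¹ := by
  simp [invAddI_coe, sub_eq_add_neg]

lemma invAddI_injective : Function.Injective invAddI := by
  have hne (l : ℝ) : invAddI l ≠ invAddI OnePoint.infty := inv_ne_zero (ofReal_add_I_ne_zero l)
  intro x y hxy
  induction x using OnePoint.rec <;> induction y using OnePoint.rec
  · rfl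
  · exact absurd hxy.symm (hne _)
  · exact absurd hxy (hne _)
  · simpa [invAddI_coe] using hxy

lemma dense_adjoin_invAddI : Dense (StarAlgebra.adjoin ℂ {invAddI} : Set C(OnePoint ℝ, ℂ)) := by
  rw [dense_iff_closure_eq, ← StarSubalgebra.topologicalClosure_coe,
    ContinuousMap.starSubalgebra_topologicalClosure_eq_top_of_separatesPoints]
  · rfl
  · exact fun x y hxy => ⟨_, ⟨invAddI, StarAlgebra.self_mem_adjoin_singleton ℂ _, rfl⟩,
      fun h => hxy (invAddI_injective h)⟩

lemma aeval_invAddI_coe (P : MvPolynomial (Fin 2) ℂ) (l : ℝ) :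
    MvPolynomial.aeval ![invAddI, star invAddI] P l =
      MvPolynomial.eval ![((l : ℂ) + I)⁻¹, ((l : ℂ) - I)⁻¹] P := by
  rw [← ContinuousMap.evalAlgHom_apply ℂ, MvPolynomial.comp_aeval_apply]
  change MvPolynomial.eval _ P = _
  congr 2
  funext i
  fin_cases i
  · exact invAddI_coe l
  · exact star_invAddI_coe l

lemma exists_eval_eq_of_mem_adjoin_invAddI {φ : C(OnePoint ℝ, ℂ)}
    (hφ : φ ∈ StarAlgebra.adjoin ℂ {invAddI}) :
    ∃ P : MvPolynomial (Fin 2) ℂ,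
      ∀ l : ℝ, φ l = MvPolynomial.eval ![((l : ℂ) + I)⁻¹, ((l : ℂ) - I)⁻¹] P := by
  rw [← StarSubalgebra.mem_toSubalgebra,
    StarAlgebra.adjoin_singleton_toSubalgebra_eq_range_aeval] at hφ
  obtain ⟨P, rfl⟩ := hφ
  exact ⟨P, aeval_invAddI_coe P⟩

theorem weak_convergence_from_polynomial_moments_general
    (f : ℝ → ℂ) (fj : ℕ → ℝ → ℂ)
    (hf : Integrable f) (hfj : ∀ j, Integrable (fj j))
    (M : ℝ)
    (hbound : ∀ j, (∫ l : ℝ, ‖fj j l‖) ≤ M)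
    (hP : ∀ P : MvPolynomial (Fin 2) ℂ,
      Tendsto (fun j => ∫ l : ℝ,
          fj j l * MvPolynomial.eval ![((l : ℂ) + I)⁻¹, ((l : ℂ) - I)⁻¹] P)
        atTop
        (𝓝 (∫ l : ℝ,
          f l * MvPolynomial.eval ![((l : ℂ) + I)⁻¹, ((l : ℂ) - I)⁻¹] P)))
    (g : ℝ → ℂ) (hg : Continuous g) (hg0 : Tendsto g (cocompact ℝ) (𝓝 0)) :
    Tendsto (fun j => ∫ l : ℝ, fj j l * g l) atTop (𝓝 (∫ l : ℝ, f l * g l)) := by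
  let e : C(ℝ, OnePoint ℝ) := ⟨(↑), OnePoint.continuous_coe⟩
  let G : C(OnePoint ℝ, ℂ) :=
    OnePoint.continuousMapMk ⟨g, hg⟩ 0 (by rwa [coclosedCompact_eq_cocompact])
  have hequi : Equicontinuous fun j (φ : C(OnePoint ℝ, ℂ)) => ∫ l, fj j l * φ (e l) :=
    (LipschitzWith.uniformEquicontinuous _ _ fun j =>
      lipschitzWith_integral_mul_comp_continuousMap (hfj j) (hbound j) e).equicontinuous
  have hclosed := hequi.isClosed_setOfPred_tendsto (l := atTop)
    (lipschitzWith_integral_mul_comp_continuousMap hf le_rfl e).continuous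
  have hpoly : (StarAlgebra.adjoin ℂ {invAddI} : Set C(OnePoint ℝ, ℂ)) ⊆
      {φ | Tendsto (fun j => ∫ l, fj j l * φ (e l)) atTop (𝓝 (∫ l, f l * φ (e l)))} := by
    intro φ hφ
    obtain ⟨P, hφP⟩ := exists_eval_eq_of_mem_adjoin_invAddI hφ
    simpa only [Set.mem_ofPred_eq, e, ContinuousMap.coe_mk, hφP] using hP P
  exact hclosed.closure_subset_iff.mpr hpoly (dense_adjoin_invAddI.closure_eq ▸ Set.mem_univ G)

/-- Lemma 3.4: if `∫ fⱼ P((λ+i)⁻¹,(λ−i)⁻¹) → ∫ f P((λ+i)⁻¹,(λ−i)⁻¹)` for all two-variable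
polynomials `P`, and the `L¹` norms of the `fⱼ` are uniformly bounded,
then `∫ fⱼ g → ∫ f g` for all continuous `g` vanishing at infinity. -/
theorem weak_convergence_from_polynomial_moments
    (f : ℝ → ℂ) (fj : ℕ → ℝ → ℂ)
    (hf : Integrable f) (hfj : ∀ j, Integrable (fj j))
    (M : ℝ) (hM : 0 < M)
    (hbound : ∀ j, (∫ l : ℝ, ‖fj j l‖) ≤ M)
    (hP : ∀ P : MvPolynomial (Fin 2) ℂ,
      Tendsto (fun j => ∫ l : ℝ,
          fj j l * MvPolynomial.eval ![((l : ℂ) + I)⁻¹, ((l : ℂ) - I)⁻¹] P)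
        atTop
        (𝓝 (∫ l : ℝ,
          f l * MvPolynomial.eval ![((l : ℂ) + I)⁻¹, ((l : ℂ) - I)⁻¹] P)))
    (g : ℝ → ℂ) (hg : Continuous g) (hg0 : Tendsto g (cocompact ℝ) (𝓝 0)) :
    Tendsto (fun j => ∫ l : ℝ, fj j l * g l) atTop (𝓝 (∫ l : ℝ, f l * g l)) :=
  weak_convergence_from_polynomial_moments_general f fj hf hfj M hbound hP g hg hg0
end

section
/- Let E > 0 and let a' ≤ a < b ≤ b' be real numbers, and let a ≤ x ≤ x' ≤ b. Then sinh(√E(x−a)) sinh(√E(b−x')) / (√E sinh(√E(b−a))) ≤ sinh(√E(x−a')) sinh(√E(b'−x')) / (√E sinh(√E(b'−a'))); that is, the one-dimensional Dirichlet Green's function at energy −E is monotone nondecreasing under enlargement of the interval. -/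
/-!
Writing `s = √E`, the Green's function is
`sinh (s (x - a)) / sinh (s (x - a) + s (b - x)) * sinh (s (b - x')) / s`.
Since `sinh v sinh (u + d) - sinh u sinh (v + d) = sinh (v - u) sinh d`, the ratio
`u ↦ sinh u / sinh (u + d)` is monotone for `d ≥ 0`, so moving `a` to the left increases the
Green's function. The reflection `t ↦ -t` exchanges the two endpoints, which gives the same for
moving `b` to the right.
-/

open Real Set

theorem sinh_mul_sinh_add_sub_sinh_mul_sinh_add (u v d : ℝ) :
    sinh v * sinh (u + d) - sinh u * sinh (v + d) = sinh (v - u) * sinh d := by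
  rw [sinh_add, sinh_add, sinh_sub]
  ring

theorem monotoneOn_sinh_div_sinh_add {d : ℝ} (hd : 0 ≤ d) :
    MonotoneOn (fun u => sinh u / sinh (u + d)) (Ioi (-d)) := by
  intro u hu v hv huv
  have hu : 0 < sinh (u + d) := sinh_pos_iff.2 (neg_lt_iff_pos_add.1 hu)
  have hv : 0 < sinh (v + d) := sinh_pos_iff.2 (neg_lt_iff_pos_add.1 hv)
  rw [div_le_div_iff₀ hu hv, ← sub_nonneg, sinh_mul_sinh_add_sub_sinh_mul_sinh_add]
  exact mul_nonneg (sinh_nonneg_iff.2 (sub_nonneg.2 huv)) (sinh_nonneg_iff.2 hd)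

/-- The Green's function of the Dirichlet Laplacian on `(a, b)` at energy `-E`, for `x ≤ x'`. -/
noncomputable def dirichletGreen (E a b x x' : ℝ) : ℝ :=
  sinh (√E * (x - a)) * sinh (√E * (b - x')) / (√E * sinh (√E * (b - a)))

theorem dirichletGreen_neg (E a b x x' : ℝ) :
    dirichletGreen E (-b) (-a) (-x') (-x) = dirichletGreen E a b x x' := by
  unfold dirichletGreen
  ring_nf

theorem dirichletGreen_le_of_le_left {E a a' b x x' : ℝ} (hE : 0 < E) (ha'a : a' ≤ a)
    (hab : a < b) (hxb : x ≤ b) (hx'b : x' ≤ b) :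
    dirichletGreen E a b x x' ≤ dirichletGreen E a' b x x' := by
  have hs : 0 < √E := sqrt_pos.2 hE
  have split : ∀ c, dirichletGreen E c b x x' =
      sinh (√E * (x - c)) / sinh (√E * (x - c) + √E * (b - x)) * (sinh (√E * (b - x')) / √E) := by
    intro c
    rw [dirichletGreen, ← mul_add, sub_add_sub_cancel']
    ring
  have hd : 0 ≤ √E * (b - x) := mul_nonneg hs.le (sub_nonneg.2 hxb)
  have hmem : ∀ c, c < b → √E * (x - c) ∈ Ioi (-(√E * (b - x))) := fun c hc => by
    rw [mem_Ioi, neg_lt_iff_pos_add, ← mul_add, sub_add_sub_cancel']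
    exact mul_pos hs (sub_pos.2 hc)
  rw [split, split]
  refine mul_le_mul_of_nonneg_right ?_ ?_
  · exact monotoneOn_sinh_div_sinh_add hd (hmem a hab) (hmem a' (ha'a.trans_lt hab))
      (mul_le_mul_of_nonneg_left (sub_le_sub_left ha'a x) hs.le)
  · exact div_nonneg (sinh_nonneg_iff.2 (mul_nonneg hs.le (sub_nonneg.2 hx'b))) hs.le

theorem dirichletGreen_le_of_le_right {E a b b' x x' : ℝ} (hE : 0 < E) (hbb' : b ≤ b')
    (hab : a < b) (hax : a ≤ x) (hax' : a ≤ x') :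
    dirichletGreen E a b x x' ≤ dirichletGreen E a b' x x' := by
  rw [← dirichletGreen_neg, ← dirichletGreen_neg E a b']
  exact dirichletGreen_le_of_le_left hE (neg_le_neg hbb') (neg_lt_neg hab) (neg_le_neg hax')
    (neg_le_neg hax)

/-- Domain monotonicity (the one-dimensional instance of (4.10)): the Dirichlet Green's
function at energy `−E` increases when the interval `(a,b)` is enlarged to `(a',b')`. -/
theorem dirichlet_green_domain_monotone (E a b a' b' x x' : ℝ) (hE : 0 < E)
    (ha'a : a' ≤ a) (hab : a < b) (hbb' : b ≤ b')
    (hax : a ≤ x) (hxx' : x ≤ x') (hx'b : x' ≤ b) :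
    sinh (sqrt E * (x - a)) * sinh (sqrt E * (b - x'))
        / (sqrt E * sinh (sqrt E * (b - a)))
      ≤ sinh (sqrt E * (x - a')) * sinh (sqrt E * (b' - x'))
          / (sqrt E * sinh (sqrt E * (b' - a'))) :=
  (dirichletGreen_le_of_le_left hE ha'a hab (hxx'.trans hx'b) hx'b).trans
    (dirichletGreen_le_of_le_right hE hbb' (ha'a.trans_lt hab) (ha'a.trans hax)
      (ha'a.trans (hax.trans hxx')))
end

section
/- Let R > 0, E > 0, and let x, x' ∈ ℝ³ satisfy ‖x‖ < R, 0 < ‖x'‖ < R, and x ≠ x'. Set ρ = (‖x'‖/R)·‖x − (R²/‖x'‖²) x'‖. Then 0 ≤ e^{−√E‖x−x'‖}/(4π‖x−x'‖) − e^{−√E ρ}/(4π ρ) ≤ e^{−√E‖x−x'‖}/(4π‖x−x'‖); that is, the method-of-images Dirichlet Green's function of the ball B_R at energy −E is nonnegative and bounded above by the free Green's function of ℝ³. -/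
/-!
With `ρ` the distance to the Kelvin image of `x'`, one has
`ρ² - ‖x - x'‖² = (R² - ‖x'‖²)(R² - ‖x‖²) / R² ≥ 0` inside the ball. Since the Yukawa kernel
`e^{-k r} / (4 π r)` is positive and decreasing in `r > 0`, the image term lies between `0`
and the free term.
-/

open Real

/-- The free Green's function `G₀(-k², x, x')` of `ℝ³` at distance `r = ‖x - x'‖`. -/
noncomputable def yukawaKernel (k r : ℝ) : ℝ :=
  exp (-(k * r)) / (4 * π * r)

lemma yukawaKernel_pos (k : ℝ) {r : ℝ} (hr : 0 < r) : 0 < yukawaKernel k r := by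
  unfold yukawaKernel
  positivity

lemma yukawaKernel_le_of_le {k r s : ℝ} (hk : 0 ≤ k) (hr : 0 < r) (hrs : r ≤ s) :
    yukawaKernel k s ≤ yukawaKernel k r := by
  unfold yukawaKernel
  apply div_le_div₀ (exp_pos _).le
  · exact exp_le_exp.mpr (by nlinarith)
  · positivity
  · nlinarith [pi_pos]

section KelvinImage

variable {F : Type*} [NormedAddCommGroup F] [InnerProductSpace ℝ F]

/-- The paper's `ρ_R(x, y)`: `(R² / ‖y‖²) • y` is the inversion of `y` in the sphere of radius `R`. -/
noncomputable def kelvinImageDist (R : ℝ) (x y : F) : ℝ :=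
  (‖y‖ / R) * ‖x - (R ^ 2 / ‖y‖ ^ 2) • y‖

lemma kelvinImageDist_sq_sub_norm_sub_sq {R : ℝ} (hR : R ≠ 0) (x : F) {y : F} (hy : y ≠ 0) :
    kelvinImageDist R x y ^ 2 - ‖x - y‖ ^ 2 = (R ^ 2 - ‖y‖ ^ 2) * (R ^ 2 - ‖x‖ ^ 2) / R ^ 2 := by
  have hy' : ‖y‖ ≠ 0 := norm_ne_zero_iff.mpr hy
  rw [kelvinImageDist, mul_pow, norm_sub_sq_real, norm_sub_sq_real, real_inner_smul_right,
    norm_smul, norm_of_nonneg (by positivity : 0 ≤ R ^ 2 / ‖y‖ ^ 2)]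
  field_simp
  ring

lemma norm_sub_le_kelvinImageDist {R : ℝ} {x y : F} (hx : ‖x‖ < R) (hy : y ≠ 0)
    (hyR : ‖y‖ ≤ R) : ‖x - y‖ ≤ kelvinImageDist R x y := by
  have hR : 0 < R := (norm_nonneg x).trans_lt hx
  have hgap : 0 ≤ kelvinImageDist R x y ^ 2 - ‖x - y‖ ^ 2 := by
    rw [kelvinImageDist_sq_sub_norm_sub_sq hR.ne' x hy]
    apply div_nonneg _ (sq_nonneg R)
    apply mul_nonneg <;> nlinarith [norm_nonneg x, norm_nonneg y]
  have hρ : 0 ≤ kelvinImageDist R x y := by unfold kelvinImageDist; positivity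
  nlinarith [norm_nonneg (x - y)]

end KelvinImage

theorem ball_dirichlet_green_bounds_general (R E : ℝ)
    (x x' : EuclideanSpace ℝ (Fin 3))
    (hx : ‖x‖ < R) (hx'0 : 0 < ‖x'‖) (hx' : ‖x'‖ < R) (hxx' : x ≠ x') :
    0 ≤ exp (-(sqrt E * ‖x - x'‖)) / (4 * π * ‖x - x'‖)
        - exp (-(sqrt E * ((‖x'‖ / R) * ‖x - (R ^ 2 / ‖x'‖ ^ 2) • x'‖)))
            / (4 * π * ((‖x'‖ / R) * ‖x - (R ^ 2 / ‖x'‖ ^ 2) • x'‖)) ∧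
    exp (-(sqrt E * ‖x - x'‖)) / (4 * π * ‖x - x'‖)
        - exp (-(sqrt E * ((‖x'‖ / R) * ‖x - (R ^ 2 / ‖x'‖ ^ 2) • x'‖)))
            / (4 * π * ((‖x'‖ / R) * ‖x - (R ^ 2 / ‖x'‖ ^ 2) • x'‖))
      ≤ exp (-(sqrt E * ‖x - x'‖)) / (4 * π * ‖x - x'‖) := by
  change 0 ≤ yukawaKernel (sqrt E) ‖x - x'‖ - yukawaKernel (sqrt E) (kelvinImageDist R x x') ∧
    yukawaKernel (sqrt E) ‖x - x'‖ - yukawaKernel (sqrt E) (kelvinImageDist R x x')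
      ≤ yukawaKernel (sqrt E) ‖x - x'‖
  have hd : 0 < ‖x - x'‖ := norm_pos_iff.mpr (sub_ne_zero.mpr hxx')
  have hdρ : ‖x - x'‖ ≤ kelvinImageDist R x x' :=
    norm_sub_le_kelvinImageDist hx (norm_pos_iff.mp hx'0) hx'.le
  exact ⟨sub_nonneg.mpr (yukawaKernel_le_of_le (sqrt_nonneg E) hd hdρ),
    sub_le_self _ (yukawaKernel_pos _ (hd.trans_le hdρ)).le⟩

/-- The `n = 3`, negative-energy instance of (4.10) and (4.29): the method-of-images
Dirichlet Green's function of the ball `B_R ⊂ ℝ³` at energy `−E` is nonnegative and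
bounded above by the free Green's function of `ℝ³`. -/
theorem ball_dirichlet_green_bounds (R E : ℝ) (hR : 0 < R) (hE : 0 < E)
    (x x' : EuclideanSpace ℝ (Fin 3))
    (hx : ‖x‖ < R) (hx'0 : 0 < ‖x'‖) (hx' : ‖x'‖ < R) (hxx' : x ≠ x') :
    0 ≤ exp (-(sqrt E * ‖x - x'‖)) / (4 * π * ‖x - x'‖)
        - exp (-(sqrt E * ((‖x'‖ / R) * ‖x - (R ^ 2 / ‖x'‖ ^ 2) • x'‖)))
            / (4 * π * ((‖x'‖ / R) * ‖x - (R ^ 2 / ‖x'‖ ^ 2) • x'‖)) ∧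
    exp (-(sqrt E * ‖x - x'‖)) / (4 * π * ‖x - x'‖)
        - exp (-(sqrt E * ((‖x'‖ / R) * ‖x - (R ^ 2 / ‖x'‖ ^ 2) • x'‖)))
            / (4 * π * ((‖x'‖ / R) * ‖x - (R ^ 2 / ‖x'‖ ^ 2) • x'‖))
      ≤ exp (-(sqrt E * ‖x - x'‖)) / (4 * π * ‖x - x'‖) :=
  ball_dirichlet_green_bounds_general R E x x' hx hx'0 hx' hxx'
end
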